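/- arXiv:1606.05577 — 3 statements merged into one kernel-verified Lean document; each statement's English description precedes it below -/
import Mathlib

section
/- Let θ : (0,1] → [0,∞) be a non-decreasing function with ∫₀¹ θ(t)/t dt < ∞. Define θ̃(t) = t · sup_{τ ∈ [t,1]} θ(τ)/τ for t ∈ (0,1]. Then: (i) θ(t) ≤ θ̃(t) for all t ∈ (0,1]; (ii) the function t ↦ θ̃(t)/t is non-increasing on (0,1], and consequently θ̃(2t) ≤ 2 θ̃(t) for all t ∈ (0,1/2]; (iii) ∫₀¹ θ̃(t)/t dt < ∞. -/
/-!
Parts (i) and (ii) are immediate once `θ̃ t / t` is seen as a supremum over the shrinking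
intervals `[t, 1]`, and doubling follows from (ii). For the Dini condition, monotonicity of `θ`
gives `θ τ / τ ≤ 4 ∫_τ^{2τ} θ s / s² ds` for `τ ≤ 1/2`, hence
`θ̃ t / t ≤ 4 ∫_t^1 θ s / s² ds + 2 θ 1`, and by Tonelli
`∫_0^1 ∫_t^1 θ s / s² ds dt = ∫_0^1 θ s / s ds < ∞`.
-/

open Set MeasureTheory
open scoped ENNReal

/-- No boundedness is needed: `sSup` of an empty or unbounded set of reals is `0`. -/
theorem ENNReal.ofReal_sSup_le {S : Set ℝ} {B : ℝ≥0∞} (h : ∀ x ∈ S, ENNReal.ofReal x ≤ B) :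
    ENNReal.ofReal (sSup S) ≤ B := by
  rcases eq_or_ne B ⊤ with rfl | hB
  · exact le_top
  · rw [ENNReal.ofReal_le_iff_le_toReal hB]
    exact Real.sSup_le (fun x hx => (ENNReal.ofReal_le_iff_le_toReal hB).mp (h x hx))
      ENNReal.toReal_nonneg

theorem lintegral_Ioc_setLIntegral_Ioc {a b : ℝ} {g : ℝ → ℝ≥0∞}
    (hg : AEMeasurable g (volume.restrict (Ioc a b))) :
    ∫⁻ t in Ioc a b, ∫⁻ s in Ioc t b, g s = ∫⁻ s in Ioc a b, ENNReal.ofReal (s - a) * g s := by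
  set μ := volume.restrict (Ioc a b)
  have hmeas : AEMeasurable (Function.uncurry fun t s => (Ioi t).indicator g s) (μ.prod μ) := by
    have : (Function.uncurry fun t s => (Ioi t).indicator g s) =
        {p : ℝ × ℝ | p.1 < p.2}.indicator (g ∘ Prod.snd) := by
      ext ⟨t, s⟩; simp [indicator_apply]
    rw [this]
    exact hg.comp_snd.indicator (measurableSet_lt measurable_fst measurable_snd)
  calc ∫⁻ t in Ioc a b, ∫⁻ s in Ioc t b, g s
      = ∫⁻ t, ∫⁻ s, (Ioi t).indicator g s ∂μ ∂μ := by
        refine setLIntegral_congr_fun measurableSet_Ioc fun t ht => ?_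
        rw [lintegral_indicator measurableSet_Ioi, Measure.restrict_restrict measurableSet_Ioi,
          inter_comm, Ioc_inter_Ioi, sup_eq_right.mpr ht.1.le]
    _ = ∫⁻ s, ∫⁻ t, (Ioi t).indicator g s ∂μ ∂μ := lintegral_lintegral_swap hmeas
    _ = ∫⁻ s in Ioc a b, ENNReal.ofReal (s - a) * g s := by
        refine setLIntegral_congr_fun measurableSet_Ioc fun s hs => ?_
        have hind : ∀ t, (Ioi t).indicator g s = (Iio s).indicator (fun _ => g s) t := by
          intro t; simp [indicator_apply]
        simp_rw [hind]
        rw [lintegral_indicator_const measurableSet_Iio, Measure.restrict_apply measurableSet_Iio]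
        have hIoo : Iio s ∩ Ioc a b = Ioo a s := by
          ext u; simp only [mem_inter_iff, mem_Iio, mem_Ioc, mem_Ioo]; grind
        rw [hIoo, Real.volume_Ioo, mul_comm]

/-- The paper's `θ̃ t / t`. -/
noncomputable def slopeSup (θ : ℝ → ℝ) (t : ℝ) : ℝ := sSup ((fun τ => θ τ / τ) '' Icc t 1)

section
variable {θ : ℝ → ℝ}

theorem bddAbove_slope_image (h1 : 0 ≤ θ 1) (hmono : MonotoneOn θ (Ioc 0 1)) {t : ℝ}
    (ht : 0 < t) : BddAbove ((fun τ => θ τ / τ) '' Icc t 1) := by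
  refine ⟨θ 1 / t, ?_⟩
  rintro _ ⟨τ, hτ, rfl⟩
  have hτ0 : 0 < τ := ht.trans_le hτ.1
  calc θ τ / τ ≤ θ 1 / τ := by gcongr; exact hmono ⟨hτ0, hτ.2⟩ ⟨one_pos, le_rfl⟩ hτ.2
    _ ≤ θ 1 / t := by gcongr; exact hτ.1

theorem div_le_slopeSup (h1 : 0 ≤ θ 1) (hmono : MonotoneOn θ (Ioc 0 1)) {t : ℝ}
    (ht : t ∈ Ioc 0 1) : θ t / t ≤ slopeSup θ t :=
  le_csSup (bddAbove_slope_image h1 hmono ht.1) ⟨t, ⟨le_rfl, ht.2⟩, rfl⟩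

theorem slopeSup_antitoneOn (h1 : 0 ≤ θ 1) (hmono : MonotoneOn θ (Ioc 0 1)) :
    AntitoneOn (slopeSup θ) (Ioc 0 1) := fun _ ha _ hb hab =>
  csSup_le_csSup (bddAbove_slope_image h1 hmono ha.1) ⟨θ 1 / 1, 1, ⟨hb.2, le_rfl⟩, rfl⟩
    (image_mono (Icc_subset_Icc_left hab))

theorem ofReal_div_le_four_mul_setLIntegral {τ : ℝ} (hτ : 0 < τ) (hθτ : 0 ≤ θ τ)
    (hθ : ∀ s ∈ Ioc τ (2 * τ), θ τ ≤ θ s) :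
    ENNReal.ofReal (θ τ / τ) ≤ 4 * ∫⁻ s in Ioc τ (2 * τ), ENNReal.ofReal (θ s / s ^ 2) := by
  calc ENNReal.ofReal (θ τ / τ)
      = 4 * (ENNReal.ofReal (θ τ / (4 * τ ^ 2)) * volume (Ioc τ (2 * τ))) := by
        rw [Real.volume_Ioc, ← ENNReal.ofReal_mul' (by linarith), ← ENNReal.ofReal_ofNat 4,
          ← ENNReal.ofReal_mul (by norm_num)]
        congr 1
        field_simp
        ring
    _ ≤ 4 * ∫⁻ s in Ioc τ (2 * τ), ENNReal.ofReal (θ s / s ^ 2) := by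
        rw [← setLIntegral_const]
        gcongr 4 * ?_
        refine setLIntegral_mono' measurableSet_Ioc fun s hs => ?_
        refine ENNReal.ofReal_le_ofReal ?_
        have hs0 : 0 < s := hτ.trans hs.1
        exact div_le_div₀ (hθτ.trans (hθ s hs)) (hθ s hs) (by positivity)
          (by nlinarith [hs.1, hs.2])

theorem ofReal_slopeSup_le (hθ : ∀ t ∈ Ioc 0 1, 0 ≤ θ t) (hmono : MonotoneOn θ (Ioc 0 1))
    {t : ℝ} (ht : t ∈ Ioc 0 1) :
    ENNReal.ofReal (slopeSup θ t) ≤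
      4 * (∫⁻ s in Ioc t 1, ENNReal.ofReal (θ s / s ^ 2)) + ENNReal.ofReal (2 * θ 1) := by
  refine ENNReal.ofReal_sSup_le ?_
  rintro _ ⟨τ, hτ, rfl⟩
  have hτ0 : 0 < τ := ht.1.trans_le hτ.1
  have hτ1 : τ ∈ Ioc 0 1 := ⟨hτ0, hτ.2⟩
  rcases le_or_gt τ (1 / 2) with hτh | hτh
  · calc ENNReal.ofReal (θ τ / τ)
        ≤ 4 * ∫⁻ s in Ioc τ (2 * τ), ENNReal.ofReal (θ s / s ^ 2) :=
          ofReal_div_le_four_mul_setLIntegral hτ0 (hθ τ hτ1) fun s hs =>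
            hmono hτ1 ⟨hτ0.trans hs.1, hs.2.trans (by linarith)⟩ hs.1.le
      _ ≤ 4 * ∫⁻ s in Ioc t 1, ENNReal.ofReal (θ s / s ^ 2) := by
          gcongr 4 * ?_
          exact lintegral_mono_set (Ioc_subset_Ioc hτ.1 (by linarith))
      _ ≤ _ := le_self_add
  · refine le_add_left (ENNReal.ofReal_le_ofReal ?_)
    have hθ1 : 0 ≤ θ 1 := hθ 1 ⟨one_pos, le_rfl⟩
    calc θ τ / τ ≤ θ 1 / τ := by gcongr; exact hmono hτ1 ⟨one_pos, le_rfl⟩ hτ.2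
      _ ≤ θ 1 / (1 / 2) := by gcongr
      _ = 2 * θ 1 := by ring

theorem lintegral_ofReal_slopeSup_lt_top (hθ : ∀ t ∈ Ioc 0 1, 0 ≤ θ t)
    (hmono : MonotoneOn θ (Ioc 0 1))
    (hdini : ∫⁻ t in Ioc 0 1, ENNReal.ofReal (θ t / t) < ⊤) :
    ∫⁻ t in Ioc 0 1, ENNReal.ofReal (slopeSup θ t) < ⊤ := by
  have hg : AEMeasurable (fun s => ENNReal.ofReal (θ s / s ^ 2)) (volume.restrict (Ioc 0 1)) :=
    ((aemeasurable_restrict_of_monotoneOn measurableSet_Ioc hmono).div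
      (by fun_prop)).ennreal_ofReal
  have hfubini : ∫⁻ t in Ioc 0 1, ∫⁻ s in Ioc t 1, ENNReal.ofReal (θ s / s ^ 2) =
      ∫⁻ s in Ioc 0 1, ENNReal.ofReal (θ s / s) := by
    rw [lintegral_Ioc_setLIntegral_Ioc hg]
    refine setLIntegral_congr_fun measurableSet_Ioc fun s hs => ?_
    rw [sub_zero, ← ENNReal.ofReal_mul hs.1.le]
    congr 1
    field_simp
  calc ∫⁻ t in Ioc 0 1, ENNReal.ofReal (slopeSup θ t)
      ≤ ∫⁻ t in Ioc 0 1, (4 * (∫⁻ s in Ioc t 1, ENNReal.ofReal (θ s / s ^ 2)) +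
          ENNReal.ofReal (2 * θ 1)) :=
        setLIntegral_mono' measurableSet_Ioc fun t ht => ofReal_slopeSup_le hθ hmono ht
    _ = 4 * (∫⁻ s in Ioc 0 1, ENNReal.ofReal (θ s / s)) +
          ENNReal.ofReal (2 * θ 1) * volume (Ioc (0 : ℝ) 1) := by
        rw [lintegral_add_right _ measurable_const, lintegral_const_mul' _ _ (by norm_num),
          hfubini, setLIntegral_const]
    _ < ⊤ := by
        rw [Real.volume_Ioc]
        exact ENNReal.add_lt_top.mpr ⟨ENNReal.mul_lt_top (by norm_num) hdini,
          ENNReal.mul_lt_top ENNReal.ofReal_lt_top ENNReal.ofReal_lt_top⟩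

end

theorem apply_two_mul_le_of_antitoneOn_div {f : ℝ → ℝ} {c : ℝ}
    (hf : AntitoneOn (fun t => f t / t) (Ioc 0 c)) {t : ℝ} (ht : t ∈ Ioc 0 (c / 2)) :
    f (2 * t) ≤ 2 * f t := by
  obtain ⟨ht0, htc⟩ := ht
  have h : f (2 * t) / (2 * t) ≤ f t / t :=
    hf ⟨ht0, by linarith⟩ ⟨by linarith, by linarith⟩ (by linarith)
  calc f (2 * t) ≤ f t / t * (2 * t) := (div_le_iff₀ (by linarith)).mp h
    _ = 2 * f t := by field_simp

/-- Any Dini modulus `θ` on `(0,1]` is dominated by `θ̃ t = t * sup_{τ ∈ [t,1]} θ τ / τ`,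
which is again a Dini modulus such that `θ̃ t / t` is non-increasing; in particular
`θ̃` satisfies the doubling property `θ̃ (2 t) ≤ 2 * θ̃ t`. -/
theorem dini_modulus_dominated_by_doubling_modulus
    (θ : ℝ → ℝ)
    (hθ_nonneg : ∀ t ∈ Ioc (0 : ℝ) 1, 0 ≤ θ t)
    (hθ_mono : MonotoneOn θ (Ioc (0 : ℝ) 1))
    (hθ_dini : ∫⁻ t in Ioc (0 : ℝ) 1, ENNReal.ofReal (θ t / t) < ⊤)
    (θt : ℝ → ℝ)
    (hθt : ∀ t ∈ Ioc (0 : ℝ) 1, θt t = t * sSup ((fun τ => θ τ / τ) '' Icc t 1)) :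
    (∀ t ∈ Ioc (0 : ℝ) 1, θ t ≤ θt t) ∧
    AntitoneOn (fun t => θt t / t) (Ioc (0 : ℝ) 1) ∧
    (∀ t ∈ Ioc (0 : ℝ) (1 / 2), θt (2 * t) ≤ 2 * θt t) ∧
    ∫⁻ t in Ioc (0 : ℝ) 1, ENNReal.ofReal (θt t / t) < ⊤ := by
  have hθ1 : 0 ≤ θ 1 := hθ_nonneg 1 ⟨one_pos, le_rfl⟩
  have hslope : ∀ t ∈ Ioc (0 : ℝ) 1, θt t / t = slopeSup θ t := fun t ht => by
    rw [hθt t ht, mul_div_cancel_left₀ _ ht.1.ne']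
    rfl
  have hanti : AntitoneOn (fun t => θt t / t) (Ioc (0 : ℝ) 1) := fun a ha b hb hab => by
    simp only [hslope a ha, hslope b hb]
    exact slopeSup_antitoneOn hθ1 hθ_mono ha hb hab
  refine ⟨fun t ht => ?_, hanti, fun t => apply_two_mul_le_of_antitoneOn_div hanti, ?_⟩
  · rw [← div_le_div_iff_of_pos_right ht.1, hslope t ht]
    exact div_le_slopeSup hθ1 hθ_mono ht
  · rw [setLIntegral_congr_fun measurableSet_Ioc fun t ht => congrArg ENNReal.ofReal (hslope t ht)]
    exact lintegral_ofReal_slopeSup_lt_top hθ_nonneg hθ_mono hθ_dini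
end

section
/- Let n ≥ 2 be an integer, γ > 1, and R > 1 be such that (n-1)·log(R/r) - γ > 0 for all r ∈ (0,1] (e.g. R > e^{γ/(n-1)}). Define u(r) = ∫_r¹ t^{1-n} (log(R/t))^{-γ} dt and α(r) = γ / ((n-1)·log(R/r) - γ). Then for every r ∈ (0,1), (α(r) + 1)·u''(r) + ((n-1)/r)·u'(r) = 0. -/
open Set Real

/-!
Differentiating under the integral sign gives `u' = -f` on `(0,1)` with
`f t = t^(1-n) (log (R/t))^(-γ)`, hence `u'' = -f'`. Writing `L = log (R/r)` and
`D = (n-1) L - γ`, one computes `u''(r) = r^(-n) L^(-γ-1) D`, while `α + 1 = (n-1) L / D`;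
so `(α + 1) u''(r) = (n-1) r^(-n) L^(-γ) = -((n-1)/r) u'(r)`.
-/

theorem hasDerivAt_integral_left_of_continuousOn {E : Type*} [NormedAddCommGroup E]
    [NormedSpace ℝ E] [CompleteSpace E] {f : ℝ → E} {U : Set ℝ} {a b : ℝ}
    (hU : IsOpen U) (hf : ContinuousOn f U) (hab : uIcc a b ⊆ U) :
    HasDerivAt (fun s => ∫ t in s..b, f t) (-f a) a :=
  have ha : a ∈ U := hab left_mem_uIcc
  intervalIntegral.integral_hasDerivAt_left ((hf.mono hab).intervalIntegrable)
    (hf.stronglyMeasurableAtFilter hU a ha) (hf.continuousAt (hU.mem_nhds ha))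

theorem hasDerivAt_log_div {R t : ℝ} (ht : t ≠ 0) (hRt : R / t ≠ 0) :
    HasDerivAt (fun s => log (R / s)) (-t⁻¹) t := by
  have hR : R ≠ 0 := by rintro rfl; simp at hRt
  have hdiv : HasDerivAt (fun s => R / s) (-(R / t ^ 2)) t := by
    simpa [div_eq_mul_inv] using (hasDerivAt_inv ht).const_mul R
  exact ((hasDerivAt_log hRt).comp t hdiv).congr_deriv (by field_simp)

theorem hasDerivAt_rpow_mul_log_div_rpow {p q R t : ℝ} (ht : t ≠ 0) (hL : log (R / t) ≠ 0) :
    HasDerivAt (fun s => s ^ p * log (R / s) ^ q)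
      (t ^ (p - 1) * log (R / t) ^ (q - 1) * (p * log (R / t) - q)) t := by
  have hRt : R / t ≠ 0 := by rintro h; simp [h] at hL
  have hpow := hasDerivAt_rpow_const (p := p) (Or.inl ht)
  have hlog := (hasDerivAt_log_div ht hRt).rpow_const (p := q) (Or.inl hL)
  refine (hpow.mul hlog).congr_deriv ?_
  rw [rpow_sub_one ht, rpow_sub_one hL]
  field_simp
  ring

theorem radial_ode_algebra {n γ r L : ℝ} (hr : r ≠ 0) (hL : L ≠ 0) (hD : (n - 1) * L - γ ≠ 0) :
    (γ / ((n - 1) * L - γ) + 1) *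
        -(r ^ (1 - n - 1) * L ^ (-γ - 1) * ((1 - n) * L - -γ))
      + ((n - 1) / r) * -(r ^ (1 - n) * L ^ (-γ)) = 0 := by
  rw [rpow_sub_one hr, rpow_sub_one hL]
  field_simp
  ring

theorem radial_counterexample_solves_ode_general
    (n : ℕ) (γ R : ℝ) (hR : 1 < R)
    (hRbig : ∀ r ∈ Ioc (0 : ℝ) 1, 0 < ((n : ℝ) - 1) * log (R / r) - γ)
    (u : ℝ → ℝ)
    (hu : u = fun s : ℝ => ∫ t in s..1, t ^ ((1 : ℝ) - n) * (log (R / t)) ^ (-γ)) :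
    ∀ r ∈ Ioo (0 : ℝ) 1,
      (γ / (((n : ℝ) - 1) * log (R / r) - γ) + 1) * deriv (deriv u) r
        + (((n : ℝ) - 1) / r) * deriv u r = 0 := by
  set f : ℝ → ℝ := fun t => t ^ ((1 : ℝ) - n) * (log (R / t)) ^ (-γ)
  have hf' : ∀ t ∈ Ioo 0 R, HasDerivAt f
      (t ^ ((1 : ℝ) - n - 1) * log (R / t) ^ (-γ - 1) * ((1 - n) * log (R / t) - -γ)) t :=
    fun t ht => hasDerivAt_rpow_mul_log_div_rpow ht.1.ne'
      (log_pos ((one_lt_div ht.1).2 ht.2)).ne'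
  have hf : ContinuousOn f (Ioo 0 R) :=
    fun t ht => (hf' t ht).continuousAt.continuousWithinAt
  have hu' : ∀ s ∈ Ioo (0 : ℝ) 1, HasDerivAt u (-f s) s := fun s hs =>
    hu ▸ hasDerivAt_integral_left_of_continuousOn isOpen_Ioo hf fun t ht => by
      rw [uIcc_of_le hs.2.le] at ht
      exact ⟨hs.1.trans_le ht.1, ht.2.trans_lt hR⟩
  intro r hr
  have hderiv : deriv u =ᶠ[nhds r] -f :=
    Filter.eventually_of_mem (isOpen_Ioo.mem_nhds hr) fun s hs => (hu' s hs).deriv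
  rw [hderiv.deriv_eq, (hu' r hr).deriv, ((hf' r ⟨hr.1, hr.2.trans hR⟩).neg).deriv]
  exact radial_ode_algebra hr.1.ne' (log_pos ((one_lt_div hr.1).2 (hr.2.trans hR))).ne'
    (hRbig r ⟨hr.1, hr.2.le⟩).ne'

/-- For `n ≥ 2`, `γ > 1` and `R > 1` with `(n-1) log (R/r) - γ > 0` on `(0,1]`,
the function `u r = ∫_r^1 t^(1-n) (log (R/t))^(-γ) dt` solves the ODE
`(α(r) + 1) u'' + ((n-1)/r) u' = 0` on `(0,1)`, where
`α r = γ / ((n-1) log (R/r) - γ)`. -/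
theorem radial_counterexample_solves_ode
    (n : ℕ) (hn : 2 ≤ n) (γ R : ℝ) (hγ : 1 < γ) (hR : 1 < R)
    (hRbig : ∀ r ∈ Ioc (0 : ℝ) 1, 0 < ((n : ℝ) - 1) * log (R / r) - γ)
    (u : ℝ → ℝ)
    (hu : u = fun s : ℝ => ∫ t in s..1, t ^ ((1 : ℝ) - n) * (log (R / t)) ^ (-γ)) :
    ∀ r ∈ Ioo (0 : ℝ) 1,
      (γ / (((n : ℝ) - 1) * log (R / r) - γ) + 1) * deriv (deriv u) r
        + (((n : ℝ) - 1) / r) * deriv u r = 0 :=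
  radial_counterexample_solves_ode_general n γ R hR hRbig u hu
end

section
/- Let n ≥ 2, let φ : (0,∞) → ℝ be twice continuously differentiable, and define u : ℝⁿ \ {0} → ℝ by u(x) = x₁ x₂ φ(|x|). Then u is twice differentiable on ℝⁿ \ {0}, and for every x ≠ 0 and every β ∈ ℝ, writing r = |x|, the trace of (I + β (x/r) ⊗ (x/r)) · D²u(x) equals (x₁ x₂ / r²) · [ (n+3) r φ'(r) + r² φ''(r) + β ( 2φ(r) + 4 r φ'(r) + r² φ''(r) ) ]. -/
open Set Real Matrix Filter Topology

/-!
With `p x = x₀ x₁` and `r = ‖x‖`, the product rule gives the Hessian of `u = p · φ(r)` as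
`φ D²p + (φ'/r) (∇p ⊗ x + x ⊗ ∇p + p I) + p ((φ'' - φ'/r) / r²) x ⊗ x`.
Since `p` is a quadratic form, `∇p · x = D²p(x, x) = 2p`, and `tr D²p = 0` because the indices
differ; hence both `tr D²u` and `xᵀ D²u x` are multiples of `p`, and
`tr ((I + β x̂ ⊗ x̂) D²u) = tr D²u + β xᵀ D²u x / r²`.
-/

section RadialDerivative

variable {E : Type*} [NormedAddCommGroup E] [InnerProductSpace ℝ E]

theorem hasFDerivAt_norm_of_ne_zero {x : E} (hx : x ≠ 0) :
    HasFDerivAt (fun y : E => ‖y‖) (‖x‖⁻¹ • innerSL ℝ x) x := by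
  have h := (hasDerivAt_sqrt (pow_ne_zero 2 (norm_ne_zero_iff.2 hx))).comp_hasFDerivAt x
    (hasStrictFDerivAt_norm_sq x).hasFDerivAt
  simp only [Function.comp_def, sqrt_sq (norm_nonneg _)] at h
  refine h.congr_fderiv ?_
  ext v
  simp only [_root_.smul_apply, innerSL_apply_apply, smul_eq_mul, nsmul_eq_mul, Nat.cast_ofNat]
  field_simp

theorem HasDerivAt.hasFDerivAt_comp_norm {f : ℝ → ℝ} {f' : ℝ} {x : E} (hx : x ≠ 0)
    (hf : HasDerivAt f f' ‖x‖) :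
    HasFDerivAt (fun y : E => f ‖y‖) ((f' / ‖x‖) • innerSL ℝ x) x := by
  have h := hf.comp_hasFDerivAt x (hasFDerivAt_norm_of_ne_zero hx)
  rwa [smul_smul, ← div_eq_mul_inv] at h

end RadialDerivative

section MonomialRadialHessian

variable {ι : Type*} [Fintype ι] [DecidableEq ι]

/-- The Hessian at `x` of `y ↦ y a * y b * ψ ‖y‖`, with `c₀ = ψ r`, `c₁ = ψ' r / r` and
`c₂ = (ψ'' r - ψ' r / r) / r ^ 2` for `r = ‖x‖`. -/
def monomialRadialHessian (a b : ι) (x : ι → ℝ) (c₀ c₁ c₂ : ℝ) : Matrix ι ι ℝ :=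
  of fun i j =>
    ((if a = i then (if b = j then 1 else 0) else 0) +
        (if b = i then (if a = j then 1 else 0) else 0)) * c₀ +
      ((if a = i then x b * x j else 0) + (if b = i then x a * x j else 0) +
        (if a = j then x b * x i else 0) + (if b = j then x a * x i else 0) +
        (if j = i then x a * x b else 0)) * c₁ +
      x a * x b * x i * x j * c₂

theorem trace_monomialRadialHessian {a b : ι} (hab : a ≠ b) (x : ι → ℝ) (c₀ c₁ c₂ : ℝ) :
    trace (monomialRadialHessian a b x c₀ c₁ c₂) =
      x a * x b * ((Fintype.card ι + 4) * c₁ + (x ⬝ᵥ x) * c₂) := by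
  simp only [trace, monomialRadialHessian, add_mul, ite_mul, one_mul, zero_mul, diag_apply,
    of_apply, if_true, Finset.sum_add_distrib, Finset.sum_ite_eq, Finset.mem_univ, hab.symm, hab,
    if_false, add_zero, Finset.sum_const, Finset.card_univ, nsmul_eq_mul, zero_add, dotProduct]
  ring_nf
  simp only [← Finset.mul_sum, ← Finset.sum_mul]
  ring

theorem monomialRadialHessian_mulVec_self (a b : ι) (x : ι → ℝ) (c₀ c₁ c₂ : ℝ) :
    monomialRadialHessian a b x c₀ c₁ c₂ *ᵥ x = fun i =>
      ((if a = i then x b else 0) + (if b = i then x a else 0)) * (c₀ + (x ⬝ᵥ x) * c₁) +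
        x a * x b * x i * (3 * c₁ + (x ⬝ᵥ x) * c₂) := by
  ext i
  simp only [mulVec, dotProduct, monomialRadialHessian, add_mul, ite_mul, one_mul, zero_mul,
    of_apply, Finset.sum_add_distrib, Finset.sum_ite_irrel, Finset.sum_ite_eq, Finset.mem_univ,
    if_true, Finset.sum_const_zero, Finset.sum_ite_eq', mul_add]
  ring_nf
  simp only [← Finset.mul_sum, ← Finset.sum_mul]
  split_ifs <;> subst_vars <;> ring

theorem dotProduct_monomialRadialHessian_mulVec_self (a b : ι) (x : ι → ℝ) (c₀ c₁ c₂ : ℝ) :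
    x ⬝ᵥ monomialRadialHessian a b x c₀ c₁ c₂ *ᵥ x =
      x a * x b * (2 * c₀ + 5 * (x ⬝ᵥ x) * c₁ + (x ⬝ᵥ x) ^ 2 * c₂) := by
  rw [monomialRadialHessian_mulVec_self]
  simp only [dotProduct, mul_add, add_mul, ite_mul, zero_mul, mul_ite, mul_zero,
    Finset.sum_add_distrib, Finset.sum_ite_eq, Finset.mem_univ, if_true]
  ring_nf
  simp only [← Finset.mul_sum, ← Finset.sum_mul]
  ring

theorem trace_of_one_add_outer_mul (H : Matrix ι ι ℝ) (v : ι → ℝ) (β c : ℝ) :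
    trace (of (fun i j => (if i = j then 1 else 0) + β * (v i / c) * (v j / c)) * H) =
      trace H + β / c ^ 2 * (v ⬝ᵥ H *ᵥ v) := by
  simp only [trace, diag, mul_apply, of_apply, add_mul, Finset.sum_add_distrib, ite_mul, one_mul,
    zero_mul, Finset.sum_ite_eq, Finset.mem_univ, if_true, dotProduct, mulVec, Finset.mul_sum]
  rw [Finset.sum_comm]
  congr 1
  refine Finset.sum_congr rfl fun i _ => Finset.sum_congr rfl fun j _ => ?_
  ring

end MonomialRadialHessian

section RadialProduct

variable {ι : Type*} [Fintype ι] {φ : ℝ → ℝ}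

theorem contDiffAt_mul_apply_mul_radial {k : WithTop ℕ∞} (a b : ι) {x : EuclideanSpace ℝ ι}
    (hx : x ≠ 0) (hφ : ContDiffAt ℝ k φ ‖x‖) :
    ContDiffAt ℝ k (fun y : EuclideanSpace ℝ ι => y a * y b * φ ‖y‖) x := by
  have hcoord (i : ι) : ContDiffAt ℝ k (fun y : EuclideanSpace ℝ ι => y i) x :=
    (EuclideanSpace.proj i : EuclideanSpace ℝ ι →L[ℝ] ℝ).contDiff.contDiffAt
  exact ((hcoord a).mul (hcoord b)).mul (hφ.comp x (contDiffAt_norm ℝ hx))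

variable [DecidableEq ι]

theorem fderiv_mul_apply_mul_radial_single (a b : ι) {y : EuclideanSpace ℝ ι} (hy : y ≠ 0)
    (hφ : DifferentiableAt ℝ φ ‖y‖) (j : ι) :
    fderiv ℝ (fun z : EuclideanSpace ℝ ι => z a * z b * φ ‖z‖) y (EuclideanSpace.single j 1) =
      (y b * (if a = j then 1 else 0) + y a * (if b = j then 1 else 0)) * φ ‖y‖ +
        y a * y b * y j * (deriv φ ‖y‖ / ‖y‖) := by
  rw [(((PiLp.hasFDerivAt_apply (𝕜 := ℝ) 2 y a).fun_mul
    (PiLp.hasFDerivAt_apply (𝕜 := ℝ) 2 y b)).fun_mul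
      (hφ.hasDerivAt.hasFDerivAt_comp_norm hy)).fderiv]
  simp only [smul_add, _root_.add_apply, _root_.smul_apply, coe_innerSL_apply,
    EuclideanSpace.inner_single_right, RCLike.conj_to_real, one_mul, smul_eq_mul, PiLp.proj_apply,
    PiLp.single_apply, mul_ite, mul_one, mul_zero]
  split_ifs <;> subst_vars <;> ring

theorem hessian_mul_apply_mul_radial (a b : ι) {x : EuclideanSpace ℝ ι}
    (hx : x ≠ 0) (hφ : ∀ᶠ s in 𝓝 ‖x‖, DifferentiableAt ℝ φ s)
    (hφ' : DifferentiableAt ℝ (deriv φ) ‖x‖) :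
    (of fun i j => fderiv ℝ (fun y => fderiv ℝ (fun z : EuclideanSpace ℝ ι => z a * z b * φ ‖z‖) y
        (EuclideanSpace.single j 1)) x (EuclideanSpace.single i 1)) =
      monomialRadialHessian a b x (φ ‖x‖) (deriv φ ‖x‖ / ‖x‖)
        ((deriv (deriv φ) ‖x‖ - deriv φ ‖x‖ / ‖x‖) / ‖x‖ ^ 2) := by
  ext i j
  have hr : ‖x‖ ≠ 0 := norm_ne_zero_iff.2 hx
  have hfirst : (fun y => fderiv ℝ (fun z : EuclideanSpace ℝ ι => z a * z b * φ ‖z‖) y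
      (EuclideanSpace.single j 1)) =ᶠ[𝓝 x] fun y =>
        (y b * (if a = j then 1 else 0) + y a * (if b = j then 1 else 0)) * φ ‖y‖ +
          y a * y b * y j * (deriv φ ‖y‖ / ‖y‖) := by
    filter_upwards [eventually_ne_nhds hx, (continuous_norm.tendsto x).eventually hφ]
      with y hy hφy
    exact fderiv_mul_apply_mul_radial_single a b hy hφy j
  have hquot : HasDerivAt (fun r => deriv φ r / r)
      ((deriv (deriv φ) ‖x‖ - deriv φ ‖x‖ / ‖x‖) / ‖x‖) ‖x‖ :=
    (hφ'.hasDerivAt.div (hasDerivAt_id' _) hr).congr_deriv (by field_simp)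
  have hcoord := fun k => PiLp.hasFDerivAt_apply (𝕜 := ℝ) 2 x k
  have hlin := ((hcoord b).mul_const (if a = j then (1 : ℝ) else 0)).fun_add
    ((hcoord a).mul_const (if b = j then (1 : ℝ) else 0))
  have hcubic := ((hcoord a).fun_mul (hcoord b)).fun_mul (hcoord j)
  rw [of_apply, hfirst.fderiv_eq,
    ((hlin.fun_mul (hφ.self_of_nhds.hasDerivAt.hasFDerivAt_comp_norm hx)).fun_add
      (hcubic.fun_mul (hquot.hasFDerivAt_comp_norm hx))).fderiv]
  simp only [mul_ite, mul_one, mul_zero, ite_smul, one_smul, zero_smul, smul_add, smul_ite,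
    smul_zero, _root_.add_apply, _root_.smul_apply, coe_innerSL_apply,
    EuclideanSpace.inner_single_right, RCLike.conj_to_real, one_mul, smul_eq_mul,
    DFunLike.ite_apply, PiLp.proj_apply, PiLp.single_apply, _root_.zero_apply,
    monomialRadialHessian, of_apply]
  split_ifs <;> subst_vars <;> ring

end RadialProduct

/-- For a `C²` function `φ` on `(0,∞)` and `u x = x₁ x₂ φ ‖x‖` on `ℝⁿ \ {0}` (`n ≥ 2`),
`u` is twice differentiable, and for every `β ∈ ℝ`, writing `r = ‖x‖`, the trace of
`(I + β (x/r) ⊗ (x/r)) · D²u(x)` equals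
`(x₁ x₂ / r²) ((n+3) r φ'(r) + r² φ''(r) + β (2 φ(r) + 4 r φ'(r) + r² φ''(r)))`. -/
theorem trace_hessian_x1x2_radial
    (n : ℕ) (hn : 2 ≤ n) (φ : ℝ → ℝ) (hφ : ContDiffOn ℝ 2 φ (Ioi (0 : ℝ)))
    (u : EuclideanSpace ℝ (Fin n) → ℝ)
    (hu : ∀ x, u x = x (⟨0, by omega⟩ : Fin n) * x (⟨1, by omega⟩ : Fin n) * φ ‖x‖) :
    ∀ x : EuclideanSpace ℝ (Fin n), x ≠ 0 →
      ContDiffAt ℝ 2 u x ∧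
      ∀ β : ℝ,
        Matrix.trace
          ((Matrix.of fun i j : Fin n =>
              (if i = j then (1 : ℝ) else 0) + β * (x i / ‖x‖) * (x j / ‖x‖)) *
            (Matrix.of fun i j : Fin n =>
              fderiv ℝ (fun y => fderiv ℝ u y (EuclideanSpace.single j 1)) x
                (EuclideanSpace.single i 1)))
          = (x (⟨0, by omega⟩ : Fin n) * x (⟨1, by omega⟩ : Fin n) / ‖x‖ ^ 2) *
              (((n : ℝ) + 3) * ‖x‖ * deriv φ ‖x‖ + ‖x‖ ^ 2 * deriv (deriv φ) ‖x‖ +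
                β * (2 * φ ‖x‖ + 4 * ‖x‖ * deriv φ ‖x‖ + ‖x‖ ^ 2 * deriv (deriv φ) ‖x‖)) := by
  intro x hx
  have hr : 0 < ‖x‖ := norm_pos_iff.2 hx
  have hφ_diff : ∀ᶠ s in 𝓝 ‖x‖, DifferentiableAt ℝ φ s := by
    filter_upwards [Ioi_mem_nhds hr] with s hs
    exact (hφ.differentiableOn (by norm_num)).differentiableAt (Ioi_mem_nhds hs)
  have hφ'_diff : DifferentiableAt ℝ (deriv φ) ‖x‖ :=
    ((hφ.deriv_of_isOpen (m := 1) isOpen_Ioi (by norm_num)).differentiableOn one_ne_zero)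
      |>.differentiableAt (Ioi_mem_nhds hr)
  obtain rfl : u = fun y => y ⟨0, by omega⟩ * y ⟨1, by omega⟩ * φ ‖y‖ := funext hu
  refine ⟨?_, fun β => ?_⟩
  · exact contDiffAt_mul_apply_mul_radial _ _ hx (hφ.contDiffAt (Ioi_mem_nhds hr))
  · have hnorm : ‖x‖ ^ 2 = x ⬝ᵥ x := by
      rw [EuclideanSpace.real_norm_sq_eq]
      simp only [dotProduct, sq]
    have hab : (⟨0, by omega⟩ : Fin n) ≠ ⟨1, by omega⟩ := by simp
    rw [hessian_mul_apply_mul_radial _ _ hx hφ_diff hφ'_diff, trace_of_one_add_outer_mul,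
      trace_monomialRadialHessian hab, dotProduct_monomialRadialHessian_mulVec_self, ← hnorm,
      Fintype.card_fin]
    field_simp
    ring
end
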